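/- Let x₁,…,x_N ∈ E be vectors in a Banach space with covariance-type operator Σ := Σ_{j=1}^N x_j ⊗ x_j : E* → E, and let U : E* → E be a bounded symmetric operator with dual-pairing norm ‖U‖_* (the norm in the dual of the operator-norm space L(E*,E)). Define the symmetric N×N matrix A with entries a_{ij} := (1/2)⟨x_i ⊗ x_j + x_j ⊗ x_i, U⟩. Then the nuclear norm of A satisfies ‖A‖₁ ≤ ‖U‖_* · ‖Σ‖, where ‖Σ‖ is the operator norm of Σ. -/
import Mathlib


set_option maxSynthPendingDepth 3

theorem stmt_11
    {E : Type*} [NormedAddCommGroup E] [NormedSpace ℝ E]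
    (N : ℕ) (x : Fin N → E)
    (U : ((E →L[ℝ] ℝ) →L[ℝ] E) →L[ℝ] ℝ) :
    ∀ B : Matrix (Fin N) (Fin N) ℝ,
      (∀ v : Fin N → ℝ, ∑ i, (∑ j, B i j * v j) ^ 2 ≤ ∑ i, (v i) ^ 2) →
      ∑ i, ∑ j,
          ((1 / 2 : ℝ) *
            U (((ContinuousLinearMap.apply ℝ ℝ (x j)).smulRight (x i)) +
                ((ContinuousLinearMap.apply ℝ ℝ (x i)).smulRight (x j)))) * B i j
        ≤ ‖U‖ * ‖∑ j, (ContinuousLinearMap.apply ℝ ℝ (x j)).smulRight (x j)‖ := by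
  intro B hB
  set M : Fin N → Fin N → ((E →L[ℝ] ℝ) →L[ℝ] E) := fun i j =>
    ((ContinuousLinearMap.apply ℝ ℝ (x j)).smulRight (x i)) +
      ((ContinuousLinearMap.apply ℝ ℝ (x i)).smulRight (x j)) with hM
  set Sig : (E →L[ℝ] ℝ) →L[ℝ] E :=
    ∑ j, (ContinuousLinearMap.apply ℝ ℝ (x j)).smulRight (x j) with hSig
  set S : (E →L[ℝ] ℝ) →L[ℝ] E :=
    ∑ i, ∑ j, ((1 / 2 : ℝ) * B i j) • M i j with hS
  have hSigapp : ∀ f : E →L[ℝ] ℝ, Sig f = ∑ j, f (x j) • x j := by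
    intro f
    simp [hSig, ContinuousLinearMap.sum_apply]
  have hquad : ∀ f : E →L[ℝ] ℝ, ∑ i, (f (x i)) ^ 2 ≤ ‖Sig‖ * ‖f‖ ^ 2 := by
    intro f
    have h1 : ∑ i, (f (x i)) ^ 2 = f (Sig f) := by
      rw [hSigapp]
      simp [sq]
    rw [h1]
    calc f (Sig f) ≤ |f (Sig f)| := le_abs_self _
      _ ≤ ‖f‖ * ‖Sig f‖ := f.le_opNorm _
      _ ≤ ‖f‖ * (‖Sig‖ * ‖f‖) := by
          gcongr
          exact Sig.le_opNorm f
      _ = ‖Sig‖ * ‖f‖ ^ 2 := by ring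
  -- the key norm bound
  have hSnorm : ‖S‖ ≤ ‖Sig‖ := by
    refine S.opNorm_le_bound (norm_nonneg Sig) (fun f => ?_)
    refine NormedSpace.norm_le_dual_bound ℝ (S f)
      (mul_nonneg (norm_nonneg _) (norm_nonneg _)) (fun g => ?_)
    set u : Fin N → ℝ := fun i => f (x i) with hu
    set v : Fin N → ℝ := fun i => g (x i) with hv
    have hgSf : g (S f) = (1 / 2 : ℝ) *
        ((∑ i, v i * ∑ j, B i j * u j) + (∑ i, u i * ∑ j, B i j * v j)) := by
      simp only [hS, hM, ContinuousLinearMap.sum_apply, ContinuousLinearMap.smul_apply,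
        ContinuousLinearMap.add_apply, ContinuousLinearMap.smulRight_apply,
        ContinuousLinearMap.apply_apply, map_sum, map_smul, map_add, smul_eq_mul]
      calc ∑ i, ∑ j, 1 / 2 * B i j * (f (x j) * g (x i) + f (x i) * g (x j))
          = ∑ i, ∑ j, ((1 / 2) * (v i * (B i j * u j)) + (1 / 2) * (u i * (B i j * v j))) :=
            Finset.sum_congr rfl fun i _ => Finset.sum_congr rfl fun j _ => by
              simp only [hu, hv]; ring
        _ = ∑ i, ((1 / 2) * (v i * ∑ j, B i j * u j) + (1 / 2) * (u i * ∑ j, B i j * v j)) := by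
            refine Finset.sum_congr rfl fun i _ => ?_
            rw [Finset.sum_add_distrib, Finset.mul_sum, Finset.mul_sum, Finset.mul_sum,
              Finset.mul_sum]
        _ = (1 / 2 : ℝ) * ((∑ i, v i * ∑ j, B i j * u j) + (∑ i, u i * ∑ j, B i j * v j)) := by
            rw [Finset.sum_add_distrib, mul_add, Finset.mul_sum, Finset.mul_sum]
    have hCS : ∀ (w z : Fin N → ℝ) (c d : ℝ), 0 ≤ c → 0 ≤ d →
        (∑ i, w i ^ 2 ≤ ‖Sig‖ * c ^ 2) →
        (∑ i, z i ^ 2 ≤ ‖Sig‖ * d ^ 2) →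
        |∑ i, z i * ∑ j, B i j * w j| ≤ ‖Sig‖ * c * d := by
      intro w z c d hc hd hw hz
      have h1 : (∑ i, z i * ∑ j, B i j * w j) ^ 2 ≤
          (∑ i, z i ^ 2) * ∑ i, (∑ j, B i j * w j) ^ 2 :=
        Finset.sum_mul_sq_le_sq_mul_sq _ _ _
      have h2 : (∑ i, z i * ∑ j, B i j * w j) ^ 2 ≤ (‖Sig‖ * c * d) ^ 2 := by
        calc (∑ i, z i * ∑ j, B i j * w j) ^ 2
            ≤ (∑ i, z i ^ 2) * ∑ i, (∑ j, B i j * w j) ^ 2 := h1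
          _ ≤ (‖Sig‖ * d ^ 2) * (‖Sig‖ * c ^ 2) := by
              refine mul_le_mul hz (le_trans (hB w) hw)
                (Finset.sum_nonneg fun i _ => sq_nonneg _)
                (mul_nonneg (norm_nonneg _) (sq_nonneg _))
          _ = (‖Sig‖ * c * d) ^ 2 := by ring
      have h3 := Real.sqrt_le_sqrt h2
      rwa [Real.sqrt_sq_eq_abs, Real.sqrt_sq (by positivity)] at h3
    have hb1 := hCS u v ‖f‖ ‖g‖ (norm_nonneg f) (norm_nonneg g) (hquad f) (hquad g)
    have hb2' := hCS v u ‖g‖ ‖f‖ (norm_nonneg g) (norm_nonneg f) (hquad g) (hquad f)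
    have hb2 : |∑ i, u i * ∑ j, B i j * v j| ≤ ‖Sig‖ * ‖f‖ * ‖g‖ := by
      rw [mul_right_comm]; exact hb2'
    have : |g (S f)| ≤ ‖Sig‖ * ‖f‖ * ‖g‖ := by
      rw [hgSf]
      calc |(1 / 2 : ℝ) * ((∑ i, v i * ∑ j, B i j * u j) + (∑ i, u i * ∑ j, B i j * v j))|
          ≤ (1 / 2 : ℝ) * (|∑ i, v i * ∑ j, B i j * u j| + |∑ i, u i * ∑ j, B i j * v j|) := by
            rw [abs_mul, abs_of_nonneg (by norm_num : (0:ℝ) ≤ 1/2)]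
            gcongr
            exact abs_add_le _ _
        _ ≤ (1 / 2 : ℝ) * ((‖Sig‖ * ‖f‖ * ‖g‖) + (‖Sig‖ * ‖f‖ * ‖g‖)) := by
            gcongr
        _ = ‖Sig‖ * ‖f‖ * ‖g‖ := by ring
    calc ‖g (S f)‖ = |g (S f)| := Real.norm_eq_abs _
      _ ≤ ‖Sig‖ * ‖f‖ * ‖g‖ := this
  -- rewrite LHS as U S
  have hUS : ∑ i, ∑ j, ((1 / 2 : ℝ) * U (M i j)) * B i j = U S := by
    rw [hS, map_sum]
    refine Finset.sum_congr rfl (fun i _ => ?_)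
    rw [map_sum]
    refine Finset.sum_congr rfl (fun j _ => ?_)
    rw [map_smul, smul_eq_mul]
    ring
  rw [hUS]
  calc U S ≤ |U S| := le_abs_self _
    _ = ‖U S‖ := (Real.norm_eq_abs _).symm
    _ ≤ ‖U‖ * ‖S‖ := U.le_opNorm S
    _ ≤ ‖U‖ * ‖Sig‖ := by gcongr
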